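/- The matrices I, α_1, ..., α_D form a basis of the space of symmetric A-like matrices for Q_D; in particular this space has dimension D + 1. -/

import Mathlib

open Matrix BigOperators Finset

/-- Vertex set of the `D`-dimensional hypercube. -/
abbrev Vx (D : ℕ) := Fin D → Fin 2

/-- Number of coordinates at which `x` and `y` differ (Hamming distance). -/
def hamming {D : ℕ} (x y : Vx D) : ℕ :=
  (Finset.univ.filter (fun i => x i ≠ y i)).card

/-- Adjacency matrix of the hypercube `Q_D`. -/
noncomputable def adjA (D : ℕ) : Matrix (Vx D) (Vx D) ℝ :=
  fun x y => if hamming x y = 1 then 1 else 0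

/-- The `i`-adjacency matrix `α_i`. -/
noncomputable def alpha {D : ℕ} (i : Fin D) : Matrix (Vx D) (Vx D) ℝ :=
  fun x y => if (x i ≠ y i ∧ ∀ j, j ≠ i → x j = y j) then 1 else 0

/-- The diagonal matrix `α*_i` with `(x,x)`-entry `(-1)^(x_i)`. -/
noncomputable def alphaStar {D : ℕ} (i : Fin D) : Matrix (Vx D) (Vx D) ℝ :=
  Matrix.diagonal (fun x => (-1 : ℝ) ^ ((x i : ℕ)))

/-!
Write a vertex as a vector over `𝔽₂`, so that `α_i` is the permutation matrix of the translation
`x ↦ x + eᵢ` and `A = ∑ α_i`. Then `BA = AB` reads `∑ₖ B x (y + eₖ) = ∑ₖ B (x + eₖ) y`, and since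
`B` lives on the diagonal and the edges, taking `y = x + eᵢ` shows that the diagonal of `B` is
invariant under every translation. Taking `y = x + eᵢ + eⱼ` shows that on each square of the cube
the two edge weights at a corner add up to those at the opposite corner; comparing two adjacent
corners with the help of symmetry forces the weight of an `i`-edge to be invariant under translation
by `eⱼ`. A translation-invariant function on the cube is constant, so
`B = B₀₀ I + ∑ wᵢ αᵢ`; the entries at `(0, 0)` and `(0, eᵢ)` show independence.
-/

section Hypercube
variable {D : ℕ}

lemma add_single_add_single_self (x : Vx D) (i : Fin D) :
    x + Pi.single i 1 + Pi.single i 1 = x := by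
  rw [add_assoc, ← Pi.single_add, show (1 + 1 : Fin 2) = 0 from rfl, Pi.single_zero, add_zero]

lemma eq_add_single_comm {x y : Vx D} {i : Fin D} :
    y = x + Pi.single i 1 ↔ x = y + Pi.single i 1 := by
  constructor <;> rintro rfl <;> exact (add_single_add_single_self _ _).symm

lemma add_single_ne_self (x : Vx D) (i : Fin D) : x + Pi.single i 1 ≠ x := fun h => by
  simpa using congrFun h i

lemma single_one_inj {i j : Fin D} : (Pi.single i 1 : Vx D) = Pi.single j 1 ↔ i = j := by
  refine ⟨fun h => ?_, fun h => h ▸ rfl⟩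
  by_contra hij
  simpa [Pi.single_apply, hij] using congrFun h i

lemma ne_and_forall_eq_iff_eq_add_single {x y : Vx D} {i : Fin D} :
    (x i ≠ y i ∧ ∀ j, j ≠ i → x j = y j) ↔ y = x + Pi.single i 1 := by
  have hflip : ∀ a b : Fin 2, a ≠ b ↔ b = a + 1 := by decide
  rw [funext_iff, hflip]
  refine ⟨fun ⟨hi, hj⟩ j => ?_,
    fun h => ⟨by simpa using h i, fun j hj => by simpa [hj] using (h j).symm⟩⟩
  rcases eq_or_ne j i with rfl | hji
  · simpa using hi
  · simpa [hji] using (hj j hji).symm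

lemma filter_ne_eq_singleton_iff {x y : Vx D} {i : Fin D} :
    univ.filter (fun j => x j ≠ y j) = {i} ↔ (x i ≠ y i ∧ ∀ j, j ≠ i → x j = y j) := by
  simp only [Finset.eq_singleton_iff_unique_mem, mem_filter, mem_univ, true_and]
  exact and_congr_right fun _ => forall_congr' fun j => by tauto

lemma hamming_eq_zero_iff {x y : Vx D} : hamming x y = 0 ↔ x = y := hammingDist_eq_zero

lemma hamming_eq_one_iff {x y : Vx D} : hamming x y = 1 ↔ ∃ i, y = x + Pi.single i 1 := by
  simp only [hamming, Finset.card_eq_one, filter_ne_eq_singleton_iff,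
    ne_and_forall_eq_iff_eq_add_single]

lemma two_le_hamming {x y : Vx D} {i j : Fin D} (hij : i ≠ j) (hi : x i ≠ y i)
    (hj : x j ≠ y j) : 2 ≤ hamming x y :=
  Finset.one_lt_card.2 ⟨i, by simpa using hi, j, by simpa using hj, hij⟩

lemma eq_or_exists_eq_add_single_or_two_le_hamming (x y : Vx D) :
    y = x ∨ (∃ i, y = x + Pi.single i 1) ∨ 2 ≤ hamming x y := by
  rw [eq_comm, ← hamming_eq_zero_iff, ← hamming_eq_one_iff]
  omega

lemma eq_of_forall_add_single {α : Type*} {f : Vx D → α}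
    (hf : ∀ x i, f (x + Pi.single i 1) = f x) (x : Vx D) : f x = f 0 := by
  have key : ∀ y, f (y + x) = f y := by
    induction x using Pi.single_induction with
    | zero => simp
    | add g h hg hh => intro y; rw [← add_assoc, hh, hg]
    | single i m => fin_cases m <;> simp [hf]
  simpa using key 0

end Hypercube

section Alpha
variable {D : ℕ}

lemma alpha_apply (i : Fin D) (x y : Vx D) :
    alpha i x y = if y = x + Pi.single i 1 then 1 else 0 := by
  simp only [alpha, ne_and_forall_eq_iff_eq_add_single]

lemma alpha_transpose (i : Fin D) : (alpha i)ᵀ = alpha i := by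
  ext x y
  simp only [transpose_apply, alpha_apply, eq_add_single_comm (x := x)]

lemma alpha_apply_eq_zero_of_two_le_hamming {i : Fin D} {x y : Vx D} (h : 2 ≤ hamming x y) :
    alpha i x y = 0 := by
  rw [alpha_apply, if_neg]
  rintro rfl
  have : hamming x (x + Pi.single i 1) = 1 := hamming_eq_one_iff.2 ⟨i, rfl⟩
  omega

lemma mul_alpha_apply (B : Matrix (Vx D) (Vx D) ℝ) (i : Fin D) (x y : Vx D) :
    (B * alpha i) x y = B x (y + Pi.single i 1) := by
  simp only [mul_apply, alpha_apply, eq_add_single_comm (y := y), mul_ite, mul_one, mul_zero,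
    sum_ite_eq', mem_univ, if_true]

lemma alpha_mul_apply (B : Matrix (Vx D) (Vx D) ℝ) (i : Fin D) (x y : Vx D) :
    (alpha i * B) x y = B (x + Pi.single i 1) y := by
  simp [mul_apply, alpha_apply]

lemma adjA_eq_sum_alpha : adjA D = ∑ i, alpha i := by
  ext x y
  rw [Matrix.sum_apply]
  simp only [adjA, alpha, ← filter_ne_eq_singleton_iff]
  by_cases h : hamming x y = 1
  · obtain ⟨a, ha⟩ := card_eq_one.1 h
    simp [h, ha, Finset.singleton_inj]
  · rw [if_neg h, sum_eq_zero fun i _ => if_neg fun hi => h (by rw [hamming, hi, card_singleton])]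

lemma alpha_mul_alpha_comm (i j : Fin D) : alpha i * alpha j = alpha j * alpha i := by
  ext x y
  rw [alpha_mul_apply, alpha_mul_apply, alpha_apply, alpha_apply, add_right_comm]

lemma alpha_mul_adjA_comm (i : Fin D) : alpha i * adjA D = adjA D * alpha i := by
  rw [adjA_eq_sum_alpha, mul_sum, sum_mul]
  exact sum_congr rfl fun j _ => alpha_mul_alpha_comm i j

end Alpha

def IsALike {D : ℕ} (B : Matrix (Vx D) (Vx D) ℝ) : Prop :=
  B * adjA D = adjA D * B ∧ ∀ x y : Vx D, 2 ≤ hamming x y → B x y = 0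

def symmetricALike (D : ℕ) : Submodule ℝ (Matrix (Vx D) (Vx D) ℝ) where
  carrier := {B | IsALike B ∧ Bᵀ = B}
  add_mem' := by
    rintro B C ⟨⟨hB, hBs⟩, hBt⟩ ⟨⟨hC, hCs⟩, hCt⟩
    refine ⟨⟨by rw [add_mul, mul_add, hB, hC], fun x y h => ?_⟩, by rw [transpose_add, hBt, hCt]⟩
    rw [Matrix.add_apply, hBs x y h, hCs x y h, add_zero]
  zero_mem' := ⟨⟨by rw [zero_mul, mul_zero], fun _ _ _ => rfl⟩, transpose_zero⟩
  smul_mem' := by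
    rintro c B ⟨⟨hB, hBs⟩, hBt⟩
    refine ⟨⟨by rw [smul_mul, Matrix.mul_smul, hB], fun x y h => ?_⟩, by rw [transpose_smul, hBt]⟩
    rw [Matrix.smul_apply, hBs x y h, smul_zero]

def edgeWeight {D : ℕ} (B : Matrix (Vx D) (Vx D) ℝ) (i : Fin D) (x : Vx D) : ℝ :=
  B x (x + Pi.single i 1)

section SymmetricALike
variable {D : ℕ}

lemma one_mem_symmetricALike : (1 : Matrix (Vx D) (Vx D) ℝ) ∈ symmetricALike D := by
  refine ⟨⟨by rw [one_mul, mul_one], fun x y h => one_apply_ne fun hxy => ?_⟩, transpose_one⟩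
  rw [← hamming_eq_zero_iff] at hxy
  omega

lemma alpha_mem_symmetricALike (i : Fin D) : alpha i ∈ symmetricALike D :=
  ⟨⟨alpha_mul_adjA_comm i, fun _ _ => alpha_apply_eq_zero_of_two_le_hamming⟩, alpha_transpose i⟩

variable {B : Matrix (Vx D) (Vx D) ℝ}

lemma sum_apply_add_single_eq_sum_add_single_apply (hBA : B * adjA D = adjA D * B)
    (x y : Vx D) : ∑ k, B x (y + Pi.single k 1) = ∑ k, B (x + Pi.single k 1) y := by
  simpa only [adjA_eq_sum_alpha, mul_sum, sum_mul, Matrix.sum_apply, mul_alpha_apply,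
    alpha_mul_apply] using congrFun (congrFun hBA x) y

lemma IsALike.diag_add_single (hB : IsALike B) (i : Fin D) (x : Vx D) :
    B.diag (x + Pi.single i 1) = B.diag x := by
  obtain ⟨hBA, hsupp⟩ := hB
  have h := sum_apply_add_single_eq_sum_add_single_apply hBA x (x + Pi.single i 1)
  rw [sum_eq_single i (fun k _ hki =>
      hsupp _ _ (two_le_hamming hki.symm (by simp [hki.symm]) (by simp [hki]))) (by simp),
    sum_eq_single i (fun k _ hki =>
      hsupp _ _ (two_le_hamming hki (by simp [hki]) (by simp [hki.symm]))) (by simp),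
    add_single_add_single_self] at h
  exact h.symm

lemma IsALike.square_relation (hB : IsALike B) {i j : Fin D} (hij : i ≠ j) (x : Vx D) :
    B x (x + Pi.single i 1 + Pi.single j 1 + Pi.single i 1) +
        B x (x + Pi.single i 1 + Pi.single j 1 + Pi.single j 1) =
      B (x + Pi.single i 1) (x + Pi.single i 1 + Pi.single j 1) +
        B (x + Pi.single j 1) (x + Pi.single i 1 + Pi.single j 1) := by
  obtain ⟨hBA, hsupp⟩ := hB
  have h := sum_apply_add_single_eq_sum_add_single_apply hBA x
    (x + Pi.single i 1 + Pi.single j 1)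
  rwa [Fintype.sum_eq_add i j hij fun k ⟨hki, hkj⟩ =>
      hsupp _ _ (two_le_hamming hki.symm (by simp [hki.symm, hij]) (by simp [hki, hkj])),
    Fintype.sum_eq_add i j hij fun k ⟨hki, hkj⟩ =>
      hsupp _ _ (two_le_hamming hki (by simp [hki, hkj]) (by simp [hki.symm, hij]))] at h

lemma edgeWeight_add_single (hB : B ∈ symmetricALike D) (i j : Fin D) (x : Vx D) :
    edgeWeight B i (x + Pi.single j 1) = edgeWeight B i x := by
  have hsymm : ∀ u v, B v u = B u v := IsSymm.apply hB.2
  rw [edgeWeight, edgeWeight, add_right_comm]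
  rcases eq_or_ne i j with rfl | hij
  · rw [add_single_add_single_self, hsymm]
  have h₁ := hB.1.square_relation hij x
  -- the square relation at the corner `x + eⱼ`, whose opposite corner is `x + eᵢ`
  have h₂ := hB.1.square_relation hij (x + Pi.single j 1)
  simp only [add_right_comm (x + Pi.single j 1) (Pi.single i 1), add_single_add_single_self]
    at h₁ h₂
  rw [add_right_comm (x + Pi.single i 1) (Pi.single j 1), add_single_add_single_self] at h₁
  rw [hsymm x, hsymm (x + Pi.single i 1), add_right_comm x (Pi.single j 1)] at h₂
  linarith

lemma smul_one_add_sum_smul_alpha_apply_self (c : ℝ) (a : Fin D → ℝ) (x : Vx D) :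
    (c • 1 + ∑ i, a i • alpha i) x x = c := by
  simp [Matrix.sum_apply, alpha_apply]

lemma smul_one_add_sum_smul_alpha_apply_add_single (c : ℝ) (a : Fin D → ℝ) (x : Vx D)
    (j : Fin D) : (c • 1 + ∑ i, a i • alpha i) x (x + Pi.single j 1) = a j := by
  simp [Matrix.sum_apply, alpha_apply, single_one_inj,
    one_apply_ne (add_single_ne_self x j).symm]

lemma eq_smul_one_add_sum_smul_alpha (hB : B ∈ symmetricALike D) :
    B = B 0 0 • 1 + ∑ i, edgeWeight B i 0 • alpha i := by
  have hcomb : B 0 0 • 1 + ∑ i, edgeWeight B i 0 • alpha i ∈ symmetricALike D :=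
    add_mem (Submodule.smul_mem _ _ one_mem_symmetricALike)
      (sum_mem fun i _ => Submodule.smul_mem _ _ (alpha_mem_symmetricALike i))
  ext x y
  rcases eq_or_exists_eq_add_single_or_two_le_hamming x y with rfl | ⟨i, rfl⟩ | h
  · rw [smul_one_add_sum_smul_alpha_apply_self]
    exact eq_of_forall_add_single (fun x i => hB.1.diag_add_single i x) y
  · rw [smul_one_add_sum_smul_alpha_apply_add_single]
    exact eq_of_forall_add_single (fun x j => edgeWeight_add_single hB i j x) x
  · rw [hB.1.2 x y h, hcomb.1.2 x y h]

end SymmetricALike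

noncomputable def symmBasis (D : ℕ) : Unit ⊕ Fin D → Matrix (Vx D) (Vx D) ℝ :=
  Sum.elim (fun _ => 1) alpha

section Basis
variable {D : ℕ}

lemma linearIndependent_symmBasis : LinearIndependent ℝ (symmBasis D) := by
  rw [Fintype.linearIndependent_iff]
  intro g hg
  simp only [symmBasis, Fintype.sum_sum_type, Sum.elim_inl, Sum.elim_inr, univ_unique,
    sum_singleton] at hg
  rintro (⟨⟩ | j)
  · have h := smul_one_add_sum_smul_alpha_apply_self (g (.inl ())) (fun i => g (.inr i)) 0
    rw [hg] at h
    exact h.symm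
  · have h := smul_one_add_sum_smul_alpha_apply_add_single (g (.inl ())) (fun i => g (.inr i)) 0 j
    rw [hg] at h
    exact h.symm

lemma span_symmBasis : Submodule.span ℝ (Set.range (symmBasis D)) = symmetricALike D := by
  refine le_antisymm (Submodule.span_le.2 ?_) fun B hB => ?_
  · rintro _ ⟨⟨⟩ | i, rfl⟩
    exacts [one_mem_symmetricALike, alpha_mem_symmetricALike i]
  · rw [eq_smul_one_add_sum_smul_alpha hB]
    exact add_mem (Submodule.smul_mem _ _ (Submodule.subset_span ⟨.inl (), rfl⟩))
      (sum_mem fun i _ => Submodule.smul_mem _ _ (Submodule.subset_span ⟨.inr i, rfl⟩))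

lemma finrank_span_symmBasis :
    Module.finrank ℝ (Submodule.span ℝ (Set.range (symmBasis D))) = D + 1 := by
  rw [finrank_span_eq_card linearIndependent_symmBasis]
  simp [add_comm]

end Basis

theorem sym_Alike_basis_general (D : ℕ) :
    LinearIndependent ℝ
      (Sum.elim (fun _ : Unit => (1 : Matrix (Vx D) (Vx D) ℝ)) (fun i : Fin D => alpha i)) ∧
    (Submodule.span ℝ
        (Set.range (Sum.elim (fun _ : Unit => (1 : Matrix (Vx D) (Vx D) ℝ))
          (fun i : Fin D => alpha i))) : Set (Matrix (Vx D) (Vx D) ℝ)) =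
      {B | (B * adjA D = adjA D * B ∧ ∀ x y : Vx D, 2 ≤ hamming x y → B x y = 0) ∧ Bᵀ = B} ∧
    Module.finrank ℝ
      (Submodule.span ℝ
        (Set.range (Sum.elim (fun _ : Unit => (1 : Matrix (Vx D) (Vx D) ℝ))
          (fun i : Fin D => alpha i)))) = D + 1 :=
  ⟨linearIndependent_symmBasis, congrArg SetLike.coe span_symmBasis, finrank_span_symmBasis⟩

theorem sym_Alike_basis (D : ℕ) (hD : 0 < D) :
    LinearIndependent ℝ
      (Sum.elim (fun _ : Unit => (1 : Matrix (Vx D) (Vx D) ℝ)) (fun i : Fin D => alpha i)) ∧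
    (Submodule.span ℝ
        (Set.range (Sum.elim (fun _ : Unit => (1 : Matrix (Vx D) (Vx D) ℝ))
          (fun i : Fin D => alpha i))) : Set (Matrix (Vx D) (Vx D) ℝ)) =
      {B | (B * adjA D = adjA D * B ∧ ∀ x y : Vx D, 2 ≤ hamming x y → B x y = 0) ∧ Bᵀ = B} ∧
    Module.finrank ℝ
      (Submodule.span ℝ
        (Set.range (Sum.elim (fun _ : Unit => (1 : Matrix (Vx D) (Vx D) ℝ))
          (fun i : Fin D => alpha i)))) = D + 1 :=
  sym_Alike_basis_general D
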